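/- arXiv:2601.12185 — 4 statements merged into one kernel-verified Lean document; each statement's English description precedes it below -/
import Mathlib

section
/- For a finite group G, the dimension of the ℂ-subspace of class functions on G spanned by the rational-valued characters of G equals the number of conjugacy classes of cyclic subgroups of G. -/
/-!
Write `g ≈ h` when `⟨g⟩` and `⟨h⟩` are conjugate. Its classes are in bijection with the conjugacy
classes of cyclic subgroups, and the rational characters span exactly the functions constant on
them, a space whose dimension is the number of classes.

A rational character `χ` is constant on `≈`-classes because `χ (g ^ m) = χ g` for `m` prime to the
order `n` of `g`: summing over the generalized eigenspaces of `ρ g` gives `χ (g ^ j) = P (ω ^ j)`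
for a fixed `P ∈ ℚ[X]` and a primitive `n`-th root of unity `ω`, and `ω`, `ω ^ m` have the same
minimal polynomial `Φₙ` over `ℚ`.

Conversely, the permutation character `θₓ` of `G` on `G ⧸ ⟨x⟩` is rational, nonzero at `x`, and
vanishes at every `g` such that `⟨g⟩` is not conjugate into `⟨x⟩`. So `θₓ` is a nonzero multiple of
the indicator of the class of `x` plus a combination of indicators of classes of elements of
smaller order, and induction on the order of `x` puts every class indicator in the span.
-/

/-- The induced character `(1_C)^G` of the trivial character of a subgroup `C`. -/
noncomputable def indTriv (G : Type) [Group G] [Fintype G] (C : Subgroup G) : G → ℂ :=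
  fun g => (Nat.card {x : G // x⁻¹ * g * x ∈ C} : ℂ) / (Nat.card C : ℂ)

/-- `χ : G → ℂ` is a character: the trace of a nonzero finite-dimensional complex rep. -/
def IsCharacter (G : Type) [Group G] (χ : G → ℂ) : Prop :=
  ∃ V : FDRep ℂ G, χ = V.character ∧ χ ≠ 0

/-- `χ` is an irreducible character of `G`. -/
def IsIrredChar (G : Type) [Group G] (χ : G → ℂ) : Prop :=
  ∃ V : FDRep ℂ G, CategoryTheory.Simple V ∧ χ = V.character

/-- All values of `χ` are rational. -/
def IsRatValued {G : Type} (χ : G → ℂ) : Prop := ∀ g : G, ∃ q : ℚ, χ g = (q : ℂ)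

/-- Subgroups `H` and `K` are conjugate in `G`. -/
def SubConj {G : Type} [Group G] (H K : Subgroup G) : Prop :=
  ∃ g : G, Subgroup.map (MulAut.conj g).toMonoidHom H = K

/-- The ℂ-subspace of `G → ℂ` spanned by the rational valued characters of `G`. -/
noncomputable def ratCharSpan (G : Type) [Group G] : Submodule ℂ (G → ℂ) :=
  Submodule.span ℂ {χ : G → ℂ | IsCharacter G χ ∧ IsRatValued χ}

/-- The number of conjugacy classes of cyclic subgroups of `G`. -/
noncomputable def numCyclicClasses (G : Type) [Group G] : ℕ :=
  Nat.card (Quot (fun H K : {H : Subgroup G // IsCyclic ↥H} => SubConj H.1 K.1))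

/-- Indicator function of the set of `g` with `⟨g⟩` conjugate to `⟨x⟩`. -/
noncomputable def Phi (G : Type) [Group G] (x : G) : G → ℂ := fun g =>
  letI := Classical.propDecidable
  if SubConj (Subgroup.zpowers g) (Subgroup.zpowers x) then 1 else 0

/-- The cyclotomic field `ℚ(e^{2πi/n})` as a subfield of `ℂ`. -/
noncomputable def cycField (n : ℕ) : IntermediateField ℚ ℂ :=
  IntermediateField.adjoin ℚ ({Complex.exp (2 * Real.pi * Complex.I / n)} : Set ℂ)

/-- `ψ` is in the `Gal(ℚ(ζ_n)/ℚ)`-orbit of `χ` (acting on character values). -/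
def galRel (G : Type) [Group G] (n : ℕ) (χ ψ : G → ℂ) : Prop :=
  ∃ σ : cycField n ≃ₐ[ℚ] cycField n,
    ∀ g : G, ∃ h : χ g ∈ cycField n, (σ ⟨χ g, h⟩ : ℂ) = ψ g

/-- The field `ℚ(χ)` generated by the values of `χ`. -/
noncomputable def charField (G : Type) (χ : G → ℂ) : IntermediateField ℚ ℂ :=
  IntermediateField.adjoin ℚ (Set.range χ)

/-- The rationalization `χ^rat = ∑_{σ ∈ Gal(ℚ(χ)/ℚ)} χ^σ`. -/
noncomputable def ratzn (G : Type) [Group G] (χ : G → ℂ) : G → ℂ :=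
  fun g => ∑ᶠ σ : charField G χ ≃ₐ[ℚ] charField G χ,
    (σ ⟨χ g, IntermediateField.subset_adjoin ℚ _ ⟨g, rfl⟩⟩ : ℂ)

/-- The induced character of a character `φ` of a subgroup `H`. -/
noncomputable def inducedChar (G : Type) [Group G] [Fintype G] (H : Subgroup G)
    (φ : H → ℂ) : G → ℂ := fun g =>
  letI := Classical.propDecidable
  (Nat.card H : ℂ)⁻¹ * ∑ x : G, if h : x⁻¹ * g * x ∈ H then φ ⟨x⁻¹ * g * x, h⟩ else 0

open Module Polynomial

theorem LinearMap.trace_pow_eq_of_isNilpotent_sub_algebraMap {R M : Type*} [CommRing R]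
    [IsReduced R] [AddCommGroup M] [Module R M] [Module.Free R M] [Module.Finite R M]
    {f : End R M} (μ : R) (hf : IsNilpotent (f - algebraMap R _ μ)) (j : ℕ) :
    trace R M (f ^ j) = μ ^ j * finrank R M := by
  induction j with
  | zero => simp
  | succ j ih =>
    rw [pow_succ, End.mul_eq_comp,
      trace_comp_eq_mul_of_commute_of_isNilpotent μ ((Commute.refl f).pow_left j) hf, ih, pow_succ]
    ring

theorem Module.End.exists_trace_pow_eq_sum {K V : Type*} [Field K] [IsAlgClosed K]
    [AddCommGroup V] [Module K V] [FiniteDimensional K V] (f : End K V) :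
    ∃ s : Finset K, (∀ μ ∈ s, f.HasEigenvalue μ) ∧ ∀ j : ℕ,
      LinearMap.trace K V (f ^ j) = ∑ μ ∈ s, (finrank K (f.maxGenEigenspace μ) : K) * μ ^ j := by
  classical
  have hinternal : DirectSum.IsInternal f.maxGenEigenspace :=
    DirectSum.isInternal_submodule_of_iSupIndep_of_iSup_eq_top f.independent_maxGenEigenspace
      f.iSup_maxGenEigenspace_eq_top
  have hfinite := WellFoundedGT.finite_ne_bot_of_iSupIndep f.independent_maxGenEigenspace
  refine ⟨hfinite.toFinset, fun μ hμ => ?_, fun j => ?_⟩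
  · rw [Set.Finite.mem_toFinset] at hμ
    exact (hasUnifEigenvalue_iff_hasUnifEigenvalue_one (by simp)).mp hμ
  rw [LinearMap.trace_eq_sum_trace_restrict' hinternal hfinite
    (fun μ => mapsTo_maxGenEigenspace_of_comm ((Commute.refl f).pow_right j) μ)]
  refine Finset.sum_congr rfl fun μ _ => ?_
  have hmaps := mapsTo_maxGenEigenspace_of_comm (Commute.refl f) μ
  rw [← pow_restrict j hmaps, LinearMap.trace_pow_eq_of_isNilpotent_sub_algebraMap μ _ j, mul_comm]
  convert isNilpotent_restrict_maxGenEigenspace_sub_algebraMap f μ using 1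
  ext
  rfl

theorem IsPrimitiveRoot.aeval_pow_eq_of_coprime {K : Type*} [Field K] [CharZero K] {ω : K} {n : ℕ}
    (hω : IsPrimitiveRoot ω n) (hn : 0 < n) {P : ℚ[X]} {q : ℚ} (hP : aeval ω P = q) {m : ℕ}
    (hm : m.Coprime n) : aeval (ω ^ m) P = q := by
  have hroot : aeval ω (P - C q) = 0 := by simp [hP]
  have hminpoly : minpoly ℚ ω = minpoly ℚ (ω ^ m) := by
    rw [← cyclotomic_eq_minpoly_rat hω hn, ← cyclotomic_eq_minpoly_rat (hω.pow_of_coprime m hm) hn]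
  obtain ⟨Q, hQ⟩ := hminpoly ▸ minpoly.dvd ℚ ω hroot
  have := congrArg (aeval (ω ^ m)) hQ
  rw [map_mul, minpoly.aeval, zero_mul, map_sub, aeval_C, sub_eq_zero] at this
  simpa using this

theorem Module.End.trace_pow_eq_of_coprime {V : Type*} [AddCommGroup V] [Module ℂ V]
    [FiniteDimensional ℂ V] {f : End ℂ V} {n : ℕ} (hn : 0 < n) (hf : f ^ n = 1) {q : ℚ}
    (hq : LinearMap.trace ℂ V f = q) {m : ℕ} (hm : m.Coprime n) :
    LinearMap.trace ℂ V (f ^ m) = LinearMap.trace ℂ V f := by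
  have hω := Complex.isPrimitiveRoot_exp n hn.ne'
  set ω := Complex.exp (2 * Real.pi * Complex.I / n)
  obtain ⟨s, hs, htrace⟩ := f.exists_trace_pow_eq_sum
  have hroot : ∀ μ ∈ s, ∃ k, ω ^ k = μ := fun μ hμ => by
    obtain ⟨v, hv⟩ := (hs μ hμ).exists_hasEigenvector
    have hμn : μ ^ n = 1 := by
      have := hv.pow_apply n
      rw [hf, End.one_apply] at this
      exact smul_left_injective ℂ hv.2 (by simpa using this.symm)
    have : NeZero n := ⟨hn.ne'⟩
    obtain ⟨k, -, hk⟩ := hω.eq_pow_of_pow_eq_one hμn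
    exact ⟨k, hk⟩
  choose! k hk using hroot
  set P : ℚ[X] := ∑ μ ∈ s, C (finrank ℂ (f.maxGenEigenspace μ) : ℚ) * X ^ k μ
  have htraceP : ∀ j, LinearMap.trace ℂ V (f ^ j) = aeval (ω ^ j) P := fun j => by
    rw [htrace j]
    simp only [P, map_sum, map_mul, aeval_C, map_pow, aeval_X]
    refine Finset.sum_congr rfl fun μ hμ => ?_
    rw [← pow_mul, mul_comm j, pow_mul, hk μ hμ]
    simp [mul_comm]
  have h1 := htraceP 1
  rw [pow_one, pow_one, hq] at h1
  rw [htraceP m, hω.aeval_pow_eq_of_coprime hn h1.symm hm, hq]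

theorem FDRep.char_pow_eq_of_coprime {G : Type} [Monoid G] (V : FDRep ℂ G) {g : G}
    (hg : IsOfFinOrder g) {q : ℚ} (hq : V.character g = q) {m : ℕ} (hm : m.Coprime (orderOf g)) :
    V.character (g ^ m) = V.character g := by
  simp only [FDRep.character, map_pow] at hq ⊢
  exact End.trace_pow_eq_of_coprime hg.orderOf_pos
    (by rw [← map_pow, pow_orderOf_eq_one, map_one]) hq hm

theorem exists_coprime_pow_eq_of_zpowers_eq {G : Type*} [Group G] [Finite G] {a b : G}
    (h : Subgroup.zpowers a = Subgroup.zpowers b) : ∃ m : ℕ, m.Coprime (orderOf a) ∧ a ^ m = b := by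
  obtain ⟨m, rfl⟩ := mem_powers_iff_mem_zpowers.mpr (h ▸ Subgroup.mem_zpowers b)
  refine ⟨m, ?_, rfl⟩
  have hord : orderOf (a ^ m) = orderOf a := by rw [← Nat.card_zpowers, ← Nat.card_zpowers, h]
  rw [orderOf_pow, Nat.div_eq_self] at hord
  exact Nat.coprime_comm.mp (hord.resolve_left (orderOf_pos a).ne')

section SubConj

variable {G : Type} [Group G]

theorem subConj_equivalence : Equivalence (SubConj (G := G)) where
  refl H := ⟨1, by ext; simp⟩
  symm := by
    rintro H _ ⟨g, rfl⟩
    exact ⟨g⁻¹, by ext; simp [Subgroup.map_map, mul_assoc]⟩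
  trans := by
    rintro H _ _ ⟨g, rfl⟩ ⟨g', rfl⟩
    exact ⟨g' * g, by ext; simp [Subgroup.map_map, mul_assoc]⟩

theorem subConj_zpowers_iff {g h : G} :
    SubConj (Subgroup.zpowers g) (Subgroup.zpowers h) ↔
      ∃ k : G, Subgroup.zpowers (k * g * k⁻¹) = Subgroup.zpowers h := by
  simp only [SubConj, MonoidHom.map_zpowers]
  rfl

theorem FDRep.char_eq_of_subConj_zpowers [Finite G] (V : FDRep ℂ G)
    (hrat : IsRatValued V.character) {g h : G}
    (hgh : SubConj (Subgroup.zpowers g) (Subgroup.zpowers h)) : V.character g = V.character h := by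
  obtain ⟨k, hk⟩ := subConj_zpowers_iff.mp hgh
  obtain ⟨m, hm, rfl⟩ := exists_coprime_pow_eq_of_zpowers_eq hk
  obtain ⟨q, hq⟩ := hrat (k * g * k⁻¹)
  rw [V.char_pow_eq_of_coprime (isOfFinOrder_of_finite _) hq hm, FDRep.char_conj]

variable (G) in
abbrev CyclicClasses : Type :=
  Quot (fun H K : {H : Subgroup G // IsCyclic ↥H} => SubConj H.1 K.1)

def cyclicClass (g : G) : CyclicClasses G := Quot.mk _ ⟨Subgroup.zpowers g, inferInstance⟩

theorem cyclicClass_eq_iff {g h : G} :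
    cyclicClass g = cyclicClass h ↔ SubConj (Subgroup.zpowers g) (Subgroup.zpowers h) :=
  (subConj_equivalence.comap Subtype.val).quot_mk_eq_iff _ _

theorem cyclicClass_surjective : Function.Surjective (cyclicClass (G := G)) := by
  rintro ⟨H, hH⟩
  obtain ⟨g, rfl⟩ := (H.isCyclic_iff_exists_zpowers_eq_top).mp hH
  exact ⟨g, rfl⟩

instance [Finite G] : Finite (CyclicClasses G) := .of_surjective _ cyclicClass_surjective

end SubConj

theorem Representation.char_ofMulAction {k G X : Type*} [Field k] [Monoid G] [MulAction G X]
    [Finite X] (g : G) :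
    (ofMulAction k G X).character g = Nat.card {x : X // g • x = x} := by
  classical
  have := Fintype.ofFinite X
  let b := MonoidAlgebra.basis X k
  rw [Representation.character, LinearMap.trace_eq_matrix_trace k b, Matrix.trace,
    Nat.card_eq_fintype_card, Fintype.card_subtype, ← Finset.sum_boole]
  refine Finset.sum_congr rfl fun x _ => ?_
  simp [b, LinearMap.toMatrix_apply, MonoidAlgebra.basis, Representation.ofMulAction_single,
    Finsupp.single_apply]

theorem card_conj_mem_eq_card_mul_card_fixed {G : Type*} [Group G] (C : Subgroup G) (g : G) :
    Nat.card {x : G // x⁻¹ * g * x ∈ C} = Nat.card C * Nat.card {q : G ⧸ C // g • q = q} := by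
  have he : {x : G // x⁻¹ * g * x ∈ C} ≃ (QuotientGroup.mk ⁻¹' {q : G ⧸ C | g • q = q} : Set G) :=
    Equiv.subtypeEquivRight fun y => by
      rw [← C.inv_mem_iff]
      simp [QuotientGroup.eq, mul_assoc]
  rw [Nat.card_congr he,
    Nat.card_congr (QuotientGroup.preimageMkEquivSubgroupProdSet C {q : G ⧸ C | g • q = q}),
    Nat.card_prod]
  rfl

section InducedTrivial

variable {G : Type} [Group G] [Fintype G] (C : Subgroup G)

theorem indTriv_eq_character :
    indTriv G C = (FDRep.of (Representation.ofMulAction ℂ G (G ⧸ C))).character := by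
  funext g
  have hC : (Nat.card C : ℂ) ≠ 0 := Nat.cast_ne_zero.mpr Nat.card_pos.ne'
  rw [indTriv, card_conj_mem_eq_card_mul_card_fixed, Nat.cast_mul, mul_div_cancel_left₀ _ hC]
  exact (Representation.char_ofMulAction g).symm

theorem indTriv_ne_zero_iff {g : G} : indTriv G C g ≠ 0 ↔ ∃ y : G, y⁻¹ * g * y ∈ C := by
  simp [indTriv, Nat.card_pos.ne', ← Nat.pos_iff_ne_zero, Finite.card_pos_iff]

theorem isRatValued_indTriv : IsRatValued (indTriv G C) := fun g =>
  ⟨Nat.card {x : G // x⁻¹ * g * x ∈ C} / Nat.card C, by simp [indTriv]⟩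

theorem isCharacter_indTriv : IsCharacter G (indTriv G C) :=
  ⟨_, indTriv_eq_character C, fun h => (indTriv_ne_zero_iff C).mpr ⟨1, by simp [C.one_mem]⟩
    (congrFun h 1)⟩

theorem subConj_or_orderOf_lt_of_indTriv_ne_zero {x g : G}
    (h : indTriv G (Subgroup.zpowers x) g ≠ 0) :
    SubConj (Subgroup.zpowers g) (Subgroup.zpowers x) ∨ orderOf g < orderOf x := by
  obtain ⟨y, hy⟩ := (indTriv_ne_zero_iff _).mp h
  have hconj : y⁻¹ * g * y = MulAut.conj y⁻¹ g := by simp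
  have hle : Subgroup.zpowers (y⁻¹ * g * y) ≤ Subgroup.zpowers x := Subgroup.zpowers_le.mpr hy
  have hcard := Subgroup.card_le_of_le hle
  rw [Nat.card_zpowers, Nat.card_zpowers, hconj, MulEquiv.orderOf_eq] at hcard
  refine hcard.lt_or_eq.symm.imp (fun heq => subConj_zpowers_iff.mpr ⟨y⁻¹, ?_⟩) id
  rw [inv_inv]
  refine Subgroup.eq_of_le_of_card_ge hle ?_
  rw [Nat.card_zpowers, Nat.card_zpowers, hconj, MulEquiv.orderOf_eq, heq]

end InducedTrivial

theorem Submodule.single_one_mem_of_mem {ι K : Type*} [Finite ι] [DecidableEq ι] [Field K]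
    {W : Submodule K (ι → K)} {c : ι → K} (hc : c ∈ W) {a : ι} (ha : c a ≠ 0)
    (h : ∀ b ≠ a, c b ≠ 0 → Pi.single b 1 ∈ W) : Pi.single a 1 ∈ W := by
  have := Fintype.ofFinite ι
  set rest := ∑ b ∈ Finset.univ.erase a, c b • (Pi.single b 1 : ι → K)
  have hdecomp : c = c a • Pi.single a 1 + rest := by
    rw [Finset.add_sum_erase _ (fun b => c b • (Pi.single b 1 : ι → K)) (Finset.mem_univ a)]
    ext i
    simp [Pi.single_apply]
  have hrest : rest ∈ W := W.sum_mem fun b hb => by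
    by_cases hcb : c b = 0
    · simp [hcb]
    · exact W.smul_mem _ (h b (Finset.ne_of_mem_erase hb) hcb)
  rw [← W.smul_mem_iff ha, eq_sub_of_add_eq hdecomp.symm]
  exact W.sub_mem hc hrest

theorem LinearMap.mem_range_funLeft_of_surjective {R M α β : Type*} [Semiring R] [AddCommMonoid M]
    [Module R M] {π : α → β} (hπ : Function.Surjective π) {f : α → M}
    (hf : ∀ a b, π a = π b → f a = f b) : f ∈ LinearMap.range (LinearMap.funLeft R M π) :=
  ⟨f ∘ Function.surjInv hπ, funext fun _ => hf _ _ (Function.surjInv_eq hπ _)⟩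

section Span

variable {G : Type} [Group G] [Fintype G]

theorem ratCharSpan_le_range_funLeft :
    ratCharSpan G ≤ LinearMap.range (LinearMap.funLeft ℂ ℂ (cyclicClass (G := G))) := by
  rw [ratCharSpan, Submodule.span_le]
  rintro χ ⟨⟨V, rfl, -⟩, hrat⟩
  exact LinearMap.mem_range_funLeft_of_surjective cyclicClass_surjective fun g h hgh =>
    V.char_eq_of_subConj_zpowers hrat (cyclicClass_eq_iff.mp hgh)

open scoped Classical in
theorem single_cyclicClass_mem_comap_ratCharSpan (x : G) :
    Pi.single (cyclicClass x) (1 : ℂ) ∈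
      (ratCharSpan G).comap (LinearMap.funLeft ℂ ℂ (cyclicClass (G := G))) := by
  induction hn : orderOf x using Nat.strong_induction_on generalizing x with
  | _ n ih =>
  subst hn
  set θ := indTriv G (Subgroup.zpowers x)
  have hθ : θ ∈ ratCharSpan G :=
    Submodule.subset_span ⟨isCharacter_indTriv _, isRatValued_indTriv _⟩
  obtain ⟨c, hc⟩ := ratCharSpan_le_range_funLeft hθ
  have hcθ : ∀ g, c (cyclicClass g) = θ g := fun g => congrFun hc g
  refine Submodule.single_one_mem_of_mem (c := c) (by rwa [Submodule.mem_comap, hc]) ?_ ?_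
  · rw [hcθ, indTriv_ne_zero_iff]
    exact ⟨1, by simp⟩
  · intro q hq hcq
    obtain ⟨g, rfl⟩ := cyclicClass_surjective q
    rw [hcθ] at hcq
    rcases subConj_or_orderOf_lt_of_indTriv_ne_zero hcq with hconj | hlt
    · exact absurd (cyclicClass_eq_iff.mpr hconj) hq
    · exact ih _ hlt g rfl

theorem ratCharSpan_eq_range_funLeft :
    ratCharSpan G = LinearMap.range (LinearMap.funLeft ℂ ℂ (cyclicClass (G := G))) := by
  classical
  refine le_antisymm ratCharSpan_le_range_funLeft ?_
  rw [LinearMap.range_eq_map, Submodule.map_le_iff_le_comap, ← (Pi.basisFun ℂ _).span_eq,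
    Submodule.span_le]
  rintro _ ⟨q, rfl⟩
  obtain ⟨x, rfl⟩ := cyclicClass_surjective q
  simpa using single_cyclicClass_mem_comap_ratCharSpan x

end Span

/-- The dimension of the subspace of class functions spanned by the rational valued
characters equals the number of conjugacy classes of cyclic subgroups. -/
theorem stmt0 (G : Type) [Group G] [Fintype G] :
    Module.finrank ℂ (ratCharSpan G) = numCyclicClasses G := by
  have := Fintype.ofFinite (CyclicClasses G)
  rw [ratCharSpan_eq_range_funLeft, LinearMap.finrank_range_of_inj
    (LinearMap.funLeft_injective_of_surjective _ _ _ cyclicClass_surjective),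
    Module.finrank_fintype_fun_eq_card, numCyclicClasses, Nat.card_eq_fintype_card]
end

section
/- Let G be a finite group of exponent n, H a cyclic subgroup with representative generator x, and Φ the indicator function of {g ∈ G : ⟨g⟩ conjugate to H}. Then |N_G(H)| · Φ lies in the ℚ-span of the induced characters {(1_C)^G : C cyclic subgroup of G}. -/
/-! Sorting the `y` with `y⁻¹ g y ∈ H` by the subgroup `⟨y⁻¹ g y⟩ = C ≤ H` gives, for every
subgroup `H`, `|H| · (1_H)^G = ∑_{C ≤ H} |N_G(C)| · Φ_C`, where `Φ_C` indicates `⟨g⟩ ~ C`: the `y`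
with `⟨y⁻¹ g y⟩ = C` form a coset of `N_G(C)` when `⟨g⟩ ~ C`, and there are none otherwise.
Subgroups of a cyclic group are cyclic, so Möbius inversion on the subgroup lattice, i.e. well-founded
induction on `H`, writes `|N_G(H)| · Φ_H` as an integral combination of the `(1_C)^G`. -/

open Subgroup MulAction Pointwise

theorem MulAction.card_smul_eq_of_mem_orbit {α β : Type*} [Group α] [MulAction α β] {a b : β}
    (h : b ∈ orbit α a) : Nat.card {y : α // y • a = b} = Nat.card (stabilizer α b) := by
  obtain ⟨y₀, rfl⟩ := h
  refine Nat.card_congr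
    { toFun := fun y => ⟨y * y₀⁻¹, ?_⟩
      invFun := fun s => ⟨s * y₀, ?_⟩
      left_inv := fun y => by simp
      right_inv := fun s => by simp }
  · rw [mem_stabilizer_iff, mul_smul, inv_smul_smul, y.2]
  · rw [mul_smul, s.2]

section

variable {G : Type} [Group G]

theorem Subgroup.map_conj_eq_toConjAct_smul (g : G) (H : Subgroup G) :
    H.map (MulAut.conj g).toMonoidHom = ConjAct.toConjAct g • H := by
  rw [pointwise_smul_def]
  congr 1

theorem subConj_iff_mem_orbit (H K : Subgroup G) :
    SubConj H K ↔ K ∈ orbit (ConjAct G) H := by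
  simp only [SubConj, map_conj_eq_toConjAct_smul, mem_orbit_iff]
  exact ConjAct.toConjAct.surjective.exists

theorem Subgroup.zpowers_conj (g y : G) :
    zpowers (y⁻¹ * g * y) = ConjAct.toConjAct y⁻¹ • zpowers g := by
  rw [← map_conj_eq_toConjAct_smul, MonoidHom.map_zpowers]
  simp

theorem card_stabilizer_conjAct (H : Subgroup G) :
    Nat.card (stabilizer (ConjAct G) H) = Nat.card (normalizer (H : Set G)) :=
  Nat.card_congr <| ConjAct.ofConjAct.toEquiv.subtypeEquiv fun c => by
    rw [mem_stabilizer_iff, ← conjAct_pointwise_smul_iff]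
    rfl

variable (G) in
noncomputable def conjZpowersIndicator (H : Subgroup G) : G → ℂ := fun g =>
  letI := Classical.propDecidable
  if SubConj (zpowers g) H then 1 else 0

theorem card_zpowers_conj_eq (g : G) (C : Subgroup G) :
    (Nat.card {y : G // zpowers (y⁻¹ * g * y) = C} : ℂ) =
      Nat.card (normalizer (C : Set G)) * conjZpowersIndicator G C g := by
  have : Nat.card {y : G // zpowers (y⁻¹ * g * y) = C} =
      Nat.card {c : ConjAct G // c • zpowers g = C} :=
    Nat.card_congr <| ((Equiv.inv G).trans ConjAct.toConjAct.toEquiv).subtypeEquiv fun y => by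
      simp [zpowers_conj]
  rw [this]
  by_cases h : SubConj (zpowers g) C
  · rw [card_smul_eq_of_mem_orbit ((subConj_iff_mem_orbit (zpowers g) C).1 h),
      card_stabilizer_conjAct]
    simp [conjZpowersIndicator, h]
  · have : IsEmpty {c : ConjAct G // c • zpowers g = C} :=
      ⟨fun c => h ((subConj_iff_mem_orbit _ _).2 ⟨c.1, c.2⟩)⟩
    simp [conjZpowersIndicator, h]

end

section

variable {G : Type} [Group G] [Fintype G]

open scoped Classical in
theorem card_smul_indTriv (H : Subgroup G) :
    (Nat.card H : ℂ) • indTriv G H = ∑ C ∈ Finset.univ.filter (· ≤ H),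
      (Nat.card (normalizer (C : Set G)) : ℂ) • conjZpowersIndicator G C := by
  ext g
  have hcount : Nat.card {y : G // y⁻¹ * g * y ∈ H} = ∑ C ∈ Finset.univ.filter (· ≤ H),
      Nat.card {y : G // zpowers (y⁻¹ * g * y) = C} := by
    simp only [Nat.card_eq_fintype_card, Fintype.card_subtype]
    refine Finset.card_eq_sum_card_fiberwise (f := fun y => zpowers (y⁻¹ * g * y))
      (t := Finset.univ.filter (· ≤ H)) (fun y hy => by simpa [zpowers_le] using hy) |>.trans ?_
    refine Finset.sum_congr rfl fun C hC => congrArg Finset.card ?_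
    ext y
    simp only [Finset.mem_filter, Finset.mem_univ, true_and] at hC ⊢
    exact and_iff_right_of_imp fun hy => zpowers_le.1 (hy ▸ hC)
  have hH : (Nat.card H : ℂ) ≠ 0 := Nat.cast_ne_zero.2 Nat.card_pos.ne'
  simp only [Pi.smul_apply, Finset.sum_apply, smul_eq_mul, indTriv, mul_div_cancel₀ _ hH,
    hcount, Nat.cast_sum, card_zpowers_conj_eq]

theorem card_normalizer_smul_conjZpowersIndicator_mem_span (H : Subgroup G) [IsCyclic H] :
    (Nat.card (normalizer (H : Set G)) : ℂ) • conjZpowersIndicator G H ∈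
      Submodule.span ℚ {f : G → ℂ | ∃ C : Subgroup G, IsCyclic C ∧ f = indTriv G C} := by
  classical
  revert ‹IsCyclic H›
  induction H using WellFoundedLT.induction with
  | _ H ih =>
    intro hcyc
    have hH : H ∈ Finset.univ.filter (· ≤ H) := by simp
    rw [eq_sub_of_add_eq ((Finset.add_sum_erase _ _ hH).trans (card_smul_indTriv H).symm)]
    refine Submodule.sub_mem _ ?_ (Submodule.sum_mem _ fun C hC => ?_)
    · rw [Nat.cast_smul_eq_nsmul]
      exact Submodule.smul_of_tower_mem _ _ (Submodule.subset_span ⟨H, hcyc, rfl⟩)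
    · obtain ⟨hne, hle⟩ : C ≠ H ∧ C ≤ H := by simpa using hC
      have := Subgroup.isCyclic_of_le hle
      exact ih C (lt_of_le_of_ne hle hne)

end

theorem stmt9 (G : Type) [Group G] [Fintype G] (x : G) :
    (Nat.card (Subgroup.normalizer (Subgroup.zpowers x : Set G)) : ℂ) • Phi G x ∈
      Submodule.span ℚ {f : G → ℂ | ∃ C : Subgroup G, IsCyclic ↥C ∧ f = indTriv G C} :=
  card_normalizer_smul_conjZpowersIndicator_mem_span (zpowers x)
end

section
/- (Artin) Every rational-valued character χ of a finite group G can be written as χ = Σ_H (a_H / [N_G(H) : H]) · (1_H)^G, where H ranges over the cyclic subgroups of G and a_H ∈ ℤ. -/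
/-!
A rational character `χ` takes integer values, and `χ g = χ h` whenever `⟨g⟩` and `⟨h⟩` are
conjugate, since `χ (g ^ k)` is the image of `χ g` under the automorphism `ζ ↦ ζ ^ k` of `ℚ(ζ)`.
For a subgroup `C` let `ψ_C g` be the number of conjugates of `C` containing `g`; then
`(1_C)^G / [N_G(C) : C] = ψ_C` is integer valued. Pick a representative `x_c` in each class `c` of
elements generating conjugate cyclic subgroups. Ordered by `orderOf x_c`, the integer matrix
`(ψ_{⟨x_c⟩}(x_d))_{c,d}` is block triangular with identity diagonal blocks, hence invertible over
`ℤ`, and solving `χ (x_d) = ∑_c a_c ψ_{⟨x_c⟩}(x_d)` gives the coefficients `a_{⟨x_c⟩} = a_c`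
(and `a_H = 0` for all other `H`).
-/

open Function Module Polynomial Pointwise Set Subgroup

namespace Module.End

variable {K V : Type*} [Field K] [AddCommGroup V] [Module K V]

lemma HasEigenvalue.pow_eq_one {f : End K V} {μ : K} (hμ : f.HasEigenvalue μ) {n : ℕ}
    (hf : f ^ n = 1) : μ ^ n = 1 := by
  obtain ⟨v, hv⟩ := hμ.exists_hasEigenvector
  have hv1 : (μ ^ n) • v = (1 : K) • v := by rw [← hv.pow_apply, hf, one_apply, one_smul]
  exact smul_left_injective K hv.2 hv1

variable [FiniteDimensional K V]

lemma trace_pow_restrict_maxGenEigenspace (f : End K V) (μ : K) (k : ℕ) :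
    LinearMap.trace K _ ((f.restrict (mapsTo_maxGenEigenspace_of_comm rfl μ)) ^ k) =
      μ ^ k * finrank K (f.maxGenEigenspace μ) := by
  set g := f.restrict (mapsTo_maxGenEigenspace_of_comm rfl μ)
  have hnil : IsNilpotent (g - algebraMap K _ μ) := by
    convert f.isNilpotent_restrict_maxGenEigenspace_sub_algebraMap μ using 1
    ext; rfl
  induction k with
  | zero => simp
  | succ k ih =>
    rw [pow_succ, mul_eq_comp,
      LinearMap.trace_comp_eq_mul_of_commute_of_isNilpotent μ (Commute.pow_left rfl k) hnil, ih]
    ring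

lemma exists_trace_pow_eq_sum_s10 [IsAlgClosed K] (f : End K V) :
    ∃ s : Finset K, (∀ μ ∈ s, f.HasEigenvalue μ) ∧ ∀ k : ℕ,
      LinearMap.trace K V (f ^ k) = ∑ μ ∈ s, (finrank K (f.maxGenEigenspace μ) : K) * μ ^ k := by
  classical
  have hfin : {μ : K | f.maxGenEigenspace μ ≠ ⊥}.Finite :=
    WellFoundedGT.finite_ne_bot_of_iSupIndep f.independent_maxGenEigenspace
  have hint : DirectSum.IsInternal fun μ => f.maxGenEigenspace μ :=
    DirectSum.isInternal_submodule_of_iSupIndep_of_iSup_eq_top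
      f.independent_maxGenEigenspace (iSup_maxGenEigenspace_eq_top f)
  refine ⟨hfin.toFinset, fun μ hμ => ?_, fun k => ?_⟩
  · rw [Set.Finite.mem_toFinset] at hμ
    refine hasEigenvalue_of_hasGenEigenvalue (k := finrank K V) ?_
    show f.genEigenspace μ (finrank K V) ≠ ⊥
    rwa [← maxGenEigenspace_eq_genEigenspace_finrank]
  · rw [LinearMap.trace_eq_sum_trace_restrict' hint hfin
      (fun μ => mapsTo_maxGenEigenspace_of_comm (Commute.pow_right rfl k) μ)]
    refine Finset.sum_congr rfl fun μ _ => ?_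
    rw [← pow_restrict k (mapsTo_maxGenEigenspace_of_comm rfl μ),
      trace_pow_restrict_maxGenEigenspace, mul_comm]

/-- The eigenvalues of `f` are powers of `ζ`. -/
lemma exists_trace_pow_eq_aeval [IsAlgClosed K] (f : End K V) {n : ℕ} [NeZero n]
    (hf : f ^ n = 1) {ζ : K} (hζ : IsPrimitiveRoot ζ n) :
    ∃ P : ℤ[X], ∀ k : ℕ, LinearMap.trace K V (f ^ k) = aeval (ζ ^ k) P := by
  obtain ⟨s, hs, htr⟩ := f.exists_trace_pow_eq_sum_s10
  have hpow : ∀ μ : K, ∃ i : ℕ, μ ^ n = 1 → ζ ^ i = μ := fun μ => by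
    by_cases hμ : μ ^ n = 1
    · obtain ⟨i, -, hi⟩ := hζ.eq_pow_of_pow_eq_one hμ
      exact ⟨i, fun _ => hi⟩
    · exact ⟨0, fun h => absurd h hμ⟩
  choose j hj using hpow
  refine ⟨∑ μ ∈ s, (finrank K (f.maxGenEigenspace μ) : ℤ[X]) * X ^ j μ, fun k => ?_⟩
  rw [htr k, map_sum]
  refine Finset.sum_congr rfl fun μ hμ => ?_
  rw [map_mul, map_natCast, map_pow, aeval_X, ← pow_mul, mul_comm k, pow_mul,
    hj μ ((hs μ hμ).pow_eq_one hf), mul_comm]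

end Module.End

lemma IsPrimitiveRoot.aeval_pow_eq_zero_of_coprime {K : Type*} [Field K] [CharZero K] {ζ : K}
    {n : ℕ} (hζ : IsPrimitiveRoot ζ n) (hn : 0 < n) {k : ℕ} (hk : k.Coprime n) {P : ℚ[X]}
    (hP : aeval ζ P = 0) : aeval (ζ ^ k) P = 0 := by
  obtain ⟨Q, rfl⟩ : cyclotomic n ℚ ∣ P := cyclotomic_eq_minpoly_rat hζ hn ▸ minpoly.dvd ℚ ζ hP
  have hroot : aeval (ζ ^ k) (cyclotomic n ℚ) = 0 := by
    rw [aeval_def, eval₂_eq_eval_map, map_cyclotomic]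
    exact (hζ.pow_of_coprime k hk).isRoot_cyclotomic hn
  rw [map_mul, hroot, zero_mul]

lemma exists_pow_coprime_eq_of_zpowers_eq {G : Type*} [Group G] [Finite G] {g h : G}
    (hgh : zpowers g = zpowers h) :
    ∃ k : ℕ, k.Coprime (orderOf g) ∧ g ^ k = h := by
  obtain ⟨k, hk : g ^ k = h⟩ := mem_powers_iff_mem_zpowers.mpr (hgh ▸ mem_zpowers h)
  refine ⟨k, ?_, hk⟩
  have hord : orderOf g / (orderOf g).gcd k = orderOf g := by
    rw [← orderOf_pow, hk, ← Nat.card_zpowers, ← hgh, Nat.card_zpowers]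
  rcases Nat.div_eq_self.mp hord with h0 | h1
  · exact absurd h0 (orderOf_pos g).ne'
  · exact Nat.coprime_comm.mp h1

namespace Subgroup

variable {G : Type*} [Group G]

lemma conj_mem_iff_of_inv_mul_mem_normalizer {H : Subgroup G} {g x y : G}
    (hxy : x⁻¹ * y ∈ normalizer (H : Set G)) : y⁻¹ * g * y ∈ H ↔ x⁻¹ * g * x ∈ H := by
  rw [mem_normalizer_iff''.mp hxy (x⁻¹ * g * x)]
  exact iff_of_eq (congrArg (· ∈ H) (by group))

lemma conj_mem_zpowers_iff_mem_normalizer [Finite G] {g x : G} :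
    x⁻¹ * g * x ∈ zpowers g ↔ x ∈ normalizer (zpowers g : Set G) := by
  refine ⟨fun h => ?_, fun h => (mem_normalizer_iff''.mp h g).mp (mem_zpowers g)⟩
  rw [← inv_mem_iff]
  refine mem_normalizer_fintype fun _ ⟨k, hk⟩ => ?_
  rw [← hk, ← conj_zpow, inv_inv]
  exact zpow_mem h k

lemma conj_mem_iff_smul_zpowers_le (H : Subgroup G) (g x : G) :
    x⁻¹ * g * x ∈ H ↔ (ConjAct.toConjAct x)⁻¹ • zpowers g ≤ H := by
  change _ ↔ (zpowers g).map (MulAut.conj x⁻¹).toMonoidHom ≤ H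
  rw [MonoidHom.map_zpowers, zpowers_le]
  simp

end Subgroup

section ConjugateCount

variable {G : Type*} [Group G]

/-- `g ~ h` when `⟨g⟩` and `⟨h⟩` are conjugate subgroups of `G`. -/
def zpowersConjRel (G : Type*) [Group G] : Setoid G :=
  (MulAction.orbitRel (ConjAct G) (Subgroup G)).comap zpowers

lemma zpowersConjRel_iff {g h : G} :
    zpowersConjRel G g h ↔ ∃ c : ConjAct G, c • zpowers h = zpowers g :=
  MulAction.mem_orbit_iff

noncomputable def conjugatorCount (H : Subgroup G) (g : G) : ℕ :=
  Nat.card {x : G // x⁻¹ * g * x ∈ H}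

/-- The number of conjugates `x H x⁻¹` of `H` containing `g`, indexed by the cosets
`x N_G(H)`. -/
noncomputable def conjugateCount (H : Subgroup G) (g : G) : ℕ :=
  Nat.card {q : G ⧸ normalizer (H : Set G) // q.out⁻¹ * g * q.out ∈ H}

lemma conjugatorCount_eq_of_rel (H : Subgroup G) {g h : G} (hgh : zpowersConjRel G g h) :
    conjugatorCount H g = conjugatorCount H h := by
  obtain ⟨c, hc⟩ := zpowersConjRel_iff.mp hgh
  refine Nat.card_congr ((Equiv.mulLeft (ConjAct.ofConjAct c)⁻¹).subtypeEquiv fun x => ?_)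
  rw [conj_mem_iff_smul_zpowers_le, conj_mem_iff_smul_zpowers_le, ← hc, smul_smul]
  simp [mul_inv_rev]

lemma conjugatorCount_eq_conjugateCount_mul (H : Subgroup G) (g : G) :
    conjugatorCount H g = conjugateCount H g * Nat.card (normalizer (H : Set G)) := by
  rw [conjugatorCount, conjugateCount, ← Nat.card_prod]
  refine Nat.card_congr ((groupEquivQuotientProdSubgroup.subtypeEquiv fun x => ?_).trans
    Equiv.prodSubtypeFstEquivSubtypeProd)
  obtain ⟨n, hn⟩ := QuotientGroup.mk_out_eq_mul (normalizer (H : Set G)) x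
  refine (conj_mem_iff_of_inv_mul_mem_normalizer ?_).symm
  change x⁻¹ * (QuotientGroup.mk x : G ⧸ normalizer (H : Set G)).out ∈ _
  rw [hn, inv_mul_cancel_left]
  exact n.2

lemma conjugateCount_zpowers_self [Finite G] (g : G) : conjugateCount (zpowers g) g = 1 := by
  have hq (q : G ⧸ normalizer (zpowers g : Set G)) :
      q.out ∈ normalizer (zpowers g : Set G) ↔ q = (1 : G) := by
    conv_rhs => rw [← QuotientGroup.out_eq' q, QuotientGroup.eq, mul_one, inv_mem_iff]
  simp only [conjugateCount, conj_mem_zpowers_iff_mem_normalizer, hq]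
  exact Nat.card_unique

lemma conjugateCount_eq_of_rel [Finite G] (H : Subgroup G) {g h : G}
    (hgh : zpowersConjRel G g h) : conjugateCount H g = conjugateCount H h :=
  Nat.eq_of_mul_eq_mul_right Nat.card_pos <| by
    rw [← conjugatorCount_eq_conjugateCount_mul, ← conjugatorCount_eq_conjugateCount_mul,
      conjugatorCount_eq_of_rel H hgh]

lemma exists_smul_zpowers_le_of_conjugateCount_ne_zero {H : Subgroup G} {g : G}
    (h : conjugateCount H g ≠ 0) : ∃ c : ConjAct G, c • zpowers g ≤ H := by
  obtain ⟨⟨q, hq⟩⟩ := Nat.card_ne_zero.mp h |>.1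
  exact ⟨_, (conj_mem_iff_smul_zpowers_le H g q.out).mp hq⟩

lemma orderOf_le_card_of_conjugateCount_ne_zero [Finite G] {H : Subgroup G} {g : G}
    (h : conjugateCount H g ≠ 0) : orderOf g ≤ Nat.card H := by
  obtain ⟨c, hc⟩ := exists_smul_zpowers_le_of_conjugateCount_ne_zero h
  rw [← Nat.card_zpowers, Nat.card_congr (equivSMul c _).toEquiv]
  exact card_le_of_le hc

lemma zpowersConjRel_of_conjugateCount_ne_zero [Finite G] {g h : G}
    (hgh : conjugateCount (zpowers g) h ≠ 0) (hord : orderOf g ≤ orderOf h) :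
    zpowersConjRel G g h := by
  obtain ⟨c, hc⟩ := exists_smul_zpowers_le_of_conjugateCount_ne_zero hgh
  refine zpowersConjRel_iff.mpr ⟨c, eq_of_le_of_card_ge hc ?_⟩
  rwa [← Nat.card_congr (equivSMul c _).toEquiv, Nat.card_zpowers, Nat.card_zpowers]

end ConjugateCount

namespace FDRep

variable {G : Type} [Group G]

lemma exists_character_pow_eq_aeval (V : FDRep ℂ G) {g : G} (hg : IsOfFinOrder g) {ζ : ℂ}
    (hζ : IsPrimitiveRoot ζ (orderOf g)) :
    ∃ P : ℤ[X], ∀ k : ℕ, V.character (g ^ k) = aeval (ζ ^ k) P := by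
  have : NeZero (orderOf g) := ⟨hg.orderOf_pos.ne'⟩
  obtain ⟨P, hP⟩ := Module.End.exists_trace_pow_eq_aeval (V.ρ g)
    (by rw [← map_pow, pow_orderOf_eq_one, map_one]) hζ
  exact ⟨P, fun k => by rw [character, map_pow, hP]⟩

variable (V : FDRep ℂ G) (hV : IsRatValued V.character)
include hV

lemma exists_character_eq_intCast_of_isRatValued {g : G} (hg : IsOfFinOrder g) :
    ∃ m : ℤ, V.character g = m := by
  have hζ := Complex.isPrimitiveRoot_exp _ hg.orderOf_pos.ne'
  obtain ⟨P, hP⟩ := V.exists_character_pow_eq_aeval hg hζ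
  have hint : IsIntegral ℤ (V.character g) := by
    rw [← pow_one g, hP 1, pow_one]
    exact adjoin_le_integralClosure (hζ.isIntegral hg.orderOf_pos) (aeval_mem_adjoin_singleton ℤ _)
  obtain ⟨q, hq⟩ := hV g
  rw [hq, show (q : ℂ) = algebraMap ℚ ℂ q from rfl,
    isIntegral_algebraMap_iff (algebraMap ℚ ℂ).injective,
    IsIntegrallyClosed.isIntegral_iff] at hint
  obtain ⟨m, rfl⟩ := hint
  exact ⟨m, by simp [hq]⟩

/-- `ζ` and `ζ ^ k` have the same minimal polynomial over `ℚ`, so the relation `P(ζ) = χ g` with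
`χ g ∈ ℚ` also holds at `ζ ^ k`. -/
lemma character_pow_eq_of_coprime {g : G} (hg : IsOfFinOrder g) {k : ℕ}
    (hk : k.Coprime (orderOf g)) : V.character (g ^ k) = V.character g := by
  obtain ⟨ζ, hζ⟩ : ∃ ζ : ℂ, IsPrimitiveRoot ζ (orderOf g) :=
    ⟨_, Complex.isPrimitiveRoot_exp _ hg.orderOf_pos.ne'⟩
  obtain ⟨P, hP⟩ := V.exists_character_pow_eq_aeval hg hζ
  obtain ⟨q, hq⟩ := hV g
  have hroot : aeval ζ (P.map (algebraMap ℤ ℚ) - C q) = 0 := by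
    rw [map_sub, aeval_map_algebraMap, aeval_C, ← pow_one ζ, ← hP 1, pow_one, hq, sub_eq_zero]
    rfl
  have := hζ.aeval_pow_eq_zero_of_coprime hg.orderOf_pos hk hroot
  rw [map_sub, aeval_map_algebraMap, aeval_C, sub_eq_zero] at this
  rw [hP, this, hq]
  rfl

lemma character_eq_of_zpowers_eq [Finite G] {g h : G}
    (hgh : zpowers g = zpowers h) : V.character g = V.character h := by
  obtain ⟨k, hk, rfl⟩ := exists_pow_coprime_eq_of_zpowers_eq hgh
  exact (V.character_pow_eq_of_coprime hV (isOfFinOrder_of_finite g) hk).symm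

lemma character_eq_of_zpowersConjRel [Finite G] {g h : G} (hgh : zpowersConjRel G g h) :
    V.character g = V.character h := by
  obtain ⟨c, hc⟩ := zpowersConjRel_iff.mp hgh
  change (zpowers h).map (MulAut.conj (ConjAct.ofConjAct c)).toMonoidHom = _ at hc
  rw [MonoidHom.map_zpowers] at hc
  rw [← V.character_eq_of_zpowers_eq hV hc]
  exact char_conj V h _

end FDRep

lemma finsum_mem_extend_mul {ι β R : Type*} [NonUnitalNonAssocSemiring R] {e : ι → β}
    (he : Injective e) {s : Set β} (hs : range e ⊆ s) (a : ι → R) (φ : β → R) :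
    ∑ᶠ b ∈ s, extend e a 0 b * φ b = ∑ᶠ i, a i * φ (e i) := by
  rw [← finsum_mem_inter_support_eq _ (range e) s, finsum_mem_range he]
  · simp only [he.extend_apply]
  ext b
  refine ⟨fun ⟨hb, hne⟩ => ⟨hs hb, hne⟩, fun ⟨hb, hne⟩ => ⟨?_, hne⟩⟩
  by_contra hnot
  rw [mem_support, extend_apply' _ _ _ hnot] at hne
  simp at hne

lemma Matrix.BlockTriangular.det_eq_one {ι α R : Type*} [Fintype ι] [DecidableEq ι] [CommRing R]
    [LinearOrder α] {M : Matrix ι ι R} {b : ι → α} (hM : M.BlockTriangular b)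
    (hdiag : ∀ i, M i i = 1) (hblock : ∀ i j, i ≠ j → b i = b j → M i j = 0) : M.det = 1 := by
  rw [hM.det]
  refine Finset.prod_eq_one fun k _ => ?_
  have : M.toSquareBlock b k = 1 := by
    ext ⟨i, hi⟩ ⟨j, hj⟩
    by_cases hij : i = j
    · subst hij; simp [Matrix.toSquareBlock_def, hdiag]
    · simp [Matrix.toSquareBlock_def, hij, hblock i j hij (hi.trans hj.symm)]
  rw [this, Matrix.det_one]

section Artin

variable {G : Type*} [Group G]

noncomputable def conjugateCountMatrix (G : Type*) [Group G] :
    Matrix (Quotient (zpowersConjRel G)) (Quotient (zpowersConjRel G)) ℤ :=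
  fun c d => conjugateCount (zpowers c.out) d.out

lemma conjugateCountMatrix_apply (c d : Quotient (zpowersConjRel G)) :
    conjugateCountMatrix G c d = conjugateCount (zpowers c.out) d.out :=
  rfl

lemma det_conjugateCountMatrix [Finite G] [Fintype (Quotient (zpowersConjRel G))]
    [DecidableEq (Quotient (zpowersConjRel G))] : (conjugateCountMatrix G).det = 1 := by
  refine Matrix.BlockTriangular.det_eq_one (b := fun c => OrderDual.toDual (orderOf c.out))
    (fun c d hdc => ?_) (fun c => ?_) (fun c d hcd hord => ?_)
  · by_contra hne
    rw [conjugateCountMatrix_apply, Nat.cast_eq_zero] at hne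
    have := orderOf_le_card_of_conjugateCount_ne_zero (H := zpowers c.out) hne
    rw [Nat.card_zpowers] at this
    exact this.not_gt hdc
  · rw [conjugateCountMatrix_apply, conjugateCount_zpowers_self, Nat.cast_one]
  · by_contra hne
    rw [conjugateCountMatrix_apply, Nat.cast_eq_zero] at hne
    exact hcd (Quotient.out_equiv_out.mp
      (zpowersConjRel_of_conjugateCount_ne_zero hne (OrderDual.toDual.injective hord).le))

theorem exists_eq_finsum_conjugateCount [Finite G] (f : G → ℤ)
    (hf : ∀ g h, zpowersConjRel G g h → f g = f h) :
    ∃ a : Subgroup G → ℤ,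
      ∀ g, f g = ∑ᶠ H ∈ {H : Subgroup G | IsCyclic H}, a H * conjugateCount H g := by
  classical
  have : Fintype (Quotient (zpowersConjRel G)) := Fintype.ofFinite _
  obtain ⟨a, ha⟩ := Matrix.vecMul_surjective_iff_isUnit.mpr
    ((conjugateCountMatrix G).isUnit_iff_isUnit_det.mpr
      (by rw [det_conjugateCountMatrix]; exact isUnit_one))
    (fun d => f d.out)
  have he : Injective fun c : Quotient (zpowersConjRel G) => zpowers c.out := fun c d hcd =>
    Quotient.out_equiv_out.mp (zpowersConjRel_iff.mpr ⟨1, by rw [one_smul]; exact hcd.symm⟩)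
  refine ⟨extend (fun c => zpowers c.out) a 0, fun g => ?_⟩
  have hg := Quotient.mk_out (s := zpowersConjRel G) g
  rw [finsum_mem_extend_mul he (range_subset_iff.mpr fun c => isCyclic_zpowers c.out),
    finsum_eq_sum_of_fintype]
  calc f g = f (Quotient.mk _ g).out := hf _ _ ((zpowersConjRel G).symm hg)
    _ = ∑ c, a c * conjugateCountMatrix G c (Quotient.mk _ g) := (congrFun ha _).symm
    _ = _ := by simp only [conjugateCountMatrix, conjugateCount_eq_of_rel _ hg]

lemma relIndex_normalizer_mul_card (H : Subgroup G) :
    H.relIndex (normalizer (H : Set G)) * Nat.card H = Nat.card (normalizer (H : Set G)) := by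
  rw [mul_comm, ← relIndex_bot_left, relIndex_mul_relIndex _ _ _ bot_le le_normalizer,
    relIndex_bot_left]

lemma div_relIndex_mul_indTriv {G : Type} [Group G] [Fintype G] (H : Subgroup G) (g : G) (a : ℂ) :
    a / H.relIndex (normalizer (H : Set G)) * indTriv G H g = a * conjugateCount H g := by
  have hcard : (H.relIndex (normalizer (H : Set G)) : ℂ) * Nat.card H =
      Nat.card (normalizer (H : Set G)) := by exact_mod_cast relIndex_normalizer_mul_card H
  have hH : (Nat.card H : ℂ) ≠ 0 := Nat.cast_ne_zero.mpr Nat.card_pos.ne'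
  have hN : (Nat.card (normalizer (H : Set G)) : ℂ) ≠ 0 := Nat.cast_ne_zero.mpr Nat.card_pos.ne'
  have hr : (H.relIndex (normalizer (H : Set G)) : ℂ) ≠ 0 := left_ne_zero_of_mul (hcard ▸ hN)
  change _ * ((conjugatorCount H g : ℂ) / _) = _
  rw [conjugatorCount_eq_conjugateCount_mul, Nat.cast_mul, ← hcard]
  field_simp

end Artin

theorem stmt10 (G : Type) [Group G] [Fintype G] (χ : G → ℂ)
    (h1 : IsCharacter G χ) (h2 : IsRatValued χ) :
    ∃ a : Subgroup G → ℤ, ∀ g : G,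
      χ g = ∑ᶠ H ∈ {H : Subgroup G | IsCyclic ↥H},
        ((a H : ℂ) / (H.relIndex (Subgroup.normalizer (H : Set G)) : ℂ)) * indTriv G H g := by
  obtain ⟨V, rfl, -⟩ := h1
  choose f hf using fun g =>
    V.exists_character_eq_intCast_of_isRatValued h2 (isOfFinOrder_of_finite g)
  obtain ⟨a, ha⟩ := exists_eq_finsum_conjugateCount f fun g h hgh => by
    exact_mod_cast (hf g).symm.trans ((V.character_eq_of_zpowersConjRel h2 hgh).trans (hf h))
  refine ⟨a, fun g => ?_⟩
  simp_rw [div_relIndex_mul_indTriv, hf, ha]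
  simpa using (Int.castAddHom ℂ).map_finsum_mem (fun H => a H * (conjugateCount H g : ℤ))
    (toFinite {H : Subgroup G | IsCyclic H})
end

section
/- (Serre's Artin theorem) Let G be a finite group and H₁, …, Hₙ subgroups. Every element of G is conjugate to an element of some Hᵢ if and only if every character of G is a ℚ-linear combination of characters induced from characters of the Hᵢ. -/
/-!
Let `A` be the `ℚ`-span of the characters induced from the `Hᵢ`. The projection formula
`ψ · Ind φ = Ind (Res ψ · φ)` makes `A` stable under multiplication by characters of `G`, so it
suffices to show `1 ∈ A`. The sum `c = ∑ᵢ Ind_{Hᵢ} 1` of permutation characters lies in `A`, and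
`c g` counts the cosets of the `Hᵢ` fixed by `g`, which is positive as soon as `g` is conjugate
into some `Hᵢ`. Being a root of `∏ᵥ (X - v)` over its values `v`, a function whose values are
nonzero rationals is inverted by a rational polynomial in itself; so `1 = c · p(c)` with `p(c)` a
`ℚ`-combination of characters, whence `1 ∈ A`. Conversely, an induced character vanishes
at every `g` that is not conjugate into its subgroup, and `1` does not.
-/

section Characters

open CategoryTheory MonoidalCategory

variable {G : Type} [Group G]

namespace IsCharacter

variable {χ ψ : G → ℂ}

theorem apply_one_ne_zero (hχ : IsCharacter G χ) : χ 1 ≠ 0 := by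
  obtain ⟨V, rfl, hne⟩ := hχ
  rw [FDRep.char_one, Nat.cast_ne_zero]
  intro hdim
  have : Subsingleton V := Module.finrank_zero_iff.mp hdim
  exact hne (funext fun g => by simp [FDRep.character, Subsingleton.elim (V.ρ g) 0])

theorem apply_conj (hχ : IsCharacter G χ) (g x : G) : χ (x⁻¹ * g * x) = χ g := by
  obtain ⟨V, rfl, -⟩ := hχ
  simpa using FDRep.char_conj V g x⁻¹

theorem mul (hχ : IsCharacter G χ) (hψ : IsCharacter G ψ) : IsCharacter G (χ * ψ) := by
  have hne : (χ * ψ) 1 ≠ 0 := mul_ne_zero hχ.apply_one_ne_zero hψ.apply_one_ne_zero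
  obtain ⟨V, rfl, -⟩ := hχ
  obtain ⟨W, rfl, -⟩ := hψ
  exact ⟨V ⊗ W, (FDRep.char_tensor V W).symm, fun h => hne (by rw [h]; rfl)⟩

theorem restrict (hχ : IsCharacter G χ) (H : Subgroup G) :
    IsCharacter H (fun h => χ h) := by
  have hne := hχ.apply_one_ne_zero
  obtain ⟨V, rfl, -⟩ := hχ
  exact ⟨FDRep.of ((V.ρ : Representation ℂ G V).comp H.subtype), rfl,
    fun h => hne (congrFun h 1)⟩

end IsCharacter

theorem isCharacter_one : IsCharacter G 1 := by
  refine ⟨FDRep.of (Representation.trivial ℂ G ℂ), funext fun g => ?_, one_ne_zero⟩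
  change (1 : ℂ) = LinearMap.trace ℂ ℂ 1
  simp

theorem FDRep.char_ofMulAction (X : Type) [Fintype X] [MulAction G X] (g : G) :
    (FDRep.of (Representation.ofMulAction ℂ G X)).character g =
      Nat.card (MulAction.fixedBy X g) := by
  classical
  let b : Module.Basis X ℂ (MonoidAlgebra ℂ X) := MonoidAlgebra.basis X ℂ
  have hdiag : ∀ x : X,
      LinearMap.toMatrix b b (Representation.ofMulAction ℂ G X g) x x =
        if g • x = x then 1 else 0 := fun x => by
    rw [LinearMap.toMatrix_apply]
    change b.repr (Representation.ofMulAction ℂ G X g (MonoidAlgebra.single x 1)) x = _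
    rw [Representation.ofMulAction_single]
    simp [b, MonoidAlgebra.basis, MonoidAlgebra.coeffLinearEquiv, MonoidAlgebra.coeff_single,
      Finsupp.single_apply]
  rw [FDRep.character, LinearMap.trace_eq_matrix_trace ℂ b, Matrix.trace]
  change ∑ x, LinearMap.toMatrix b b (Representation.ofMulAction ℂ G X g) x x = _
  simp only [hdiag, Finset.sum_boole, Nat.card_eq_fintype_card, Fintype.card_subtype]
  rfl

end Characters

section Induction

variable {G : Type} [Group G]

theorem QuotientGroup.mk_mem_fixedBy_iff {H : Subgroup G} {g x : G} :
    (x : G ⧸ H) ∈ MulAction.fixedBy (G ⧸ H) g ↔ x⁻¹ * g * x ∈ H := by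
  change ((g * x : G) : G ⧸ H) = x ↔ _
  rw [QuotientGroup.eq, ← H.inv_mem_iff]
  simp [mul_assoc]

theorem card_conj_mem_eq_card_mul_card_fixedBy (H : Subgroup G) (g : G) :
    Nat.card {x : G // x⁻¹ * g * x ∈ H} =
      Nat.card H * Nat.card (MulAction.fixedBy (G ⧸ H) g) := by
  rw [← Nat.card_prod, ← Nat.card_congr (QuotientGroup.preimageMkEquivSubgroupProdSet H _)]
  exact Nat.card_congr
    (Equiv.subtypeEquiv (Equiv.refl G) fun _ => QuotientGroup.mk_mem_fixedBy_iff.symm)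

theorem nonempty_fixedBy_of_isConj {H : Subgroup G} {g h : G} (hh : h ∈ H) (hgh : IsConj g h) :
    (MulAction.fixedBy (G ⧸ H) g).Nonempty := by
  obtain ⟨y, rfl⟩ := isConj_iff.mp hgh
  exact ⟨(y⁻¹ : G), QuotientGroup.mk_mem_fixedBy_iff.mpr (by simpa using hh)⟩

variable [Fintype G]

theorem inducedChar_one_apply (H : Subgroup G) (g : G) :
    inducedChar G H 1 g = Nat.card (MulAction.fixedBy (G ⧸ H) g) := by
  classical
  have hH : (Nat.card H : ℂ) ≠ 0 := Nat.cast_ne_zero.mpr Nat.card_pos.ne'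
  have hcount : (∑ x : G, if h : x⁻¹ * g * x ∈ H then (1 : H → ℂ) ⟨_, h⟩ else 0) =
      Nat.card {x : G // x⁻¹ * g * x ∈ H} := by
    simp only [Pi.one_apply, dite_eq_ite, Finset.sum_boole, Nat.card_eq_fintype_card,
      Fintype.card_subtype]
  rw [inducedChar, hcount, card_conj_mem_eq_card_mul_card_fixedBy, Nat.cast_mul,
    inv_mul_cancel_left₀ hH]

theorem isCharacter_inducedChar_one (H : Subgroup G) : IsCharacter G (inducedChar G H 1) := by
  have : Fintype (G ⧸ H) := Fintype.ofFinite _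
  refine ⟨FDRep.of (Representation.ofMulAction ℂ G (G ⧸ H)),
    funext fun g => by rw [inducedChar_one_apply, FDRep.char_ofMulAction], fun h => ?_⟩
  have : Nonempty (MulAction.fixedBy (G ⧸ H) (1 : G)) := ⟨⟨(1 : G), one_smul _ _⟩⟩
  have h1 := congrFun h 1
  rw [inducedChar_one_apply, Pi.zero_apply, Nat.cast_eq_zero] at h1
  exact Nat.card_pos.ne' h1

theorem mul_inducedChar (H : Subgroup G) {ψ : G → ℂ} (hψ : ∀ g x, ψ (x⁻¹ * g * x) = ψ g)
    (φ : H → ℂ) : ψ * inducedChar G H φ = inducedChar G H ((fun h : H => ψ h) * φ) := by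
  funext g
  simp only [Pi.mul_apply, inducedChar, mul_left_comm (ψ g), Finset.mul_sum, mul_dite, mul_zero,
    hψ]

theorem inducedChar_apply_eq_zero (H : Subgroup G) (φ : H → ℂ) {g : G}
    (hg : ∀ x : G, x⁻¹ * g * x ∉ H) : inducedChar G H φ g = 0 := by
  simp [inducedChar, hg]

end Induction

section InverseInAdjoin

open Polynomial

theorem exists_mem_adjoin_mul_eq_one_of_aeval_eq_zero {K A : Type*} [Field K] [Ring A]
    [Algebra K A] {a : A} {p : K[X]} (hp : aeval a p = 0) (h0 : p.coeff 0 ≠ 0) :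
    ∃ b ∈ Algebra.adjoin K {a}, a * b = 1 := by
  refine ⟨(-p.coeff 0)⁻¹ • aeval a p.divX,
    Subalgebra.smul_mem _ (aeval_mem_adjoin_singleton K a) _, ?_⟩
  have hdiv := congrArg (aeval a) (X_mul_divX_add p)
  rw [map_add, map_mul, aeval_X, aeval_C, hp, add_eq_zero_iff_eq_neg] at hdiv
  rw [mul_smul_comm, hdiv, ← map_neg, Algebra.smul_def, ← map_mul,
    inv_mul_cancel₀ (neg_ne_zero.mpr h0), map_one]

theorem Pi.exists_mem_adjoin_mul_eq_one {ι K B : Type*} [Fintype ι] [Field K] [CommRing B]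
    [Algebra K B] (v : ι → K) (hv : ∀ x, v x ≠ 0) :
    ∃ b ∈ Algebra.adjoin K {fun x => algebraMap K B (v x)},
      (fun x => algebraMap K B (v x)) * b = 1 := by
  refine exists_mem_adjoin_mul_eq_one_of_aeval_eq_zero (p := ∏ x, (X - C (v x))) ?_ ?_
  · funext y
    rw [aeval_pi_apply₂, map_prod, Pi.zero_apply]
    exact Finset.prod_eq_zero (Finset.mem_univ y) (by simp)
  · rw [coeff_zero_eq_eval_zero, eval_prod]
    exact Finset.prod_ne_zero_iff.mpr fun x _ => by simpa using hv x

end InverseInAdjoin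

def Submodule.mulStabilizer {R A : Type*} [CommSemiring R] [Semiring A] [Algebra R A]
    (N : Submodule R A) : Subalgebra R A where
  carrier := {a | ∀ x ∈ N, a * x ∈ N}
  mul_mem' ha hb x hx := by rw [mul_assoc]; exact ha _ (hb x hx)
  one_mem' x hx := by rwa [one_mul]
  add_mem' ha hb x hx := by rw [add_mul]; exact N.add_mem (ha x hx) (hb x hx)
  zero_mem' x _ := by rw [zero_mul]; exact N.zero_mem
  algebraMap_mem' r x hx := by rw [← Algebra.smul_def]; exact N.smul_mem r hx

section ArtinInduction

variable {G : Type} [Group G] [Fintype G] {ι : Type*} (H : ι → Subgroup G)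

noncomputable def inducedCharSpan : Submodule ℚ (G → ℂ) :=
  Submodule.span ℚ
    {f : G → ℂ | ∃ i, ∃ φ : ↥(H i) → ℂ, IsCharacter ↥(H i) φ ∧ f = inducedChar G (H i) φ}

theorem IsCharacter.mem_mulStabilizer_inducedCharSpan {ψ : G → ℂ} (hψ : IsCharacter G ψ) :
    ψ ∈ (inducedCharSpan H).mulStabilizer := by
  change inducedCharSpan H ≤ (inducedCharSpan H).comap (LinearMap.mulLeft ℚ ψ)
  refine Submodule.span_le.mpr ?_
  rintro _ ⟨i, φ, hφ, rfl⟩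
  exact Submodule.subset_span
    ⟨i, _, (hψ.restrict (H i)).mul hφ, mul_inducedChar (H i) hψ.apply_conj φ⟩

theorem apply_eq_zero_of_mem_inducedCharSpan {g : G} (hg : ∀ i, ∀ h ∈ H i, ¬IsConj g h)
    {f : G → ℂ} (hf : f ∈ inducedCharSpan H) : f g = 0 := by
  suffices inducedCharSpan H ≤ LinearMap.ker (LinearMap.proj (R := ℚ) (φ := fun _ => ℂ) g) from
    this hf
  refine Submodule.span_le.mpr ?_
  rintro _ ⟨i, φ, -, rfl⟩
  exact inducedChar_apply_eq_zero (H i) φ fun x hx => hg i _ hx (isConj_iff.mpr ⟨x⁻¹, by group⟩)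

theorem one_mem_inducedCharSpan [Fintype ι] (hcover : ∀ g : G, ∃ i, ∃ h ∈ H i, IsConj g h) :
    1 ∈ inducedCharSpan H := by
  let ν : G → ℚ := fun g => ∑ i, Nat.card (MulAction.fixedBy (G ⧸ H i) g)
  have hν : ∀ g, ν g ≠ 0 := fun g => by
    obtain ⟨i, h, hh, hgh⟩ := hcover g
    have := (nonempty_fixedBy_of_isConj hh hgh).to_subtype
    have hpos : 0 < ν g := Finset.sum_pos' (fun _ _ => by positivity)
      ⟨i, Finset.mem_univ i, Nat.cast_pos.mpr Nat.card_pos⟩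
    exact hpos.ne'
  set c : G → ℂ := ∑ i, inducedChar G (H i) 1
  have hc : c = fun g => algebraMap ℚ ℂ (ν g) := funext fun g => by
    simp [c, ν, inducedChar_one_apply]
  have hcA : c ∈ inducedCharSpan H :=
    Submodule.sum_mem _ fun i _ => Submodule.subset_span ⟨i, 1, isCharacter_one, rfl⟩
  have hcS : c ∈ (inducedCharSpan H).mulStabilizer :=
    Subalgebra.sum_mem _ fun i _ =>
      (isCharacter_inducedChar_one (H i)).mem_mulStabilizer_inducedCharSpan H
  obtain ⟨b, hb, hcb⟩ := Pi.exists_mem_adjoin_mul_eq_one (B := ℂ) ν hν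
  rw [← hc] at hb hcb
  have hbS : b ∈ (inducedCharSpan H).mulStabilizer :=
    Algebra.adjoin_le (Set.singleton_subset_iff.mpr hcS) hb
  rw [← hcb, mul_comm]
  exact hbS c hcA

end ArtinInduction

theorem stmt11 (G : Type) [Group G] [Fintype G] (n : ℕ) (H : Fin n → Subgroup G) :
    (∀ g : G, ∃ i, ∃ h ∈ H i, IsConj g h) ↔
      ∀ χ : G → ℂ, IsCharacter G χ →
        χ ∈ Submodule.span ℚ
          {f : G → ℂ | ∃ i, ∃ φ : ↥(H i) → ℂ, IsCharacter ↥(H i) φ ∧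
            f = inducedChar G (H i) φ} := by
  constructor
  · intro hcover χ hχ
    have hχ1 := hχ.mem_mulStabilizer_inducedCharSpan H 1 (one_mem_inducedCharSpan H hcover)
    rwa [mul_one] at hχ1
  · intro hspan g
    by_contra! hg
    exact one_ne_zero (apply_eq_zero_of_mem_inducedCharSpan H hg (hspan 1 isCharacter_one))
end
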